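/- Let P^⊥ and Q^⊥ be the linear cellular automaton shifts determined by Φ and Ψ respectively. If S(Φ) is not contained in S(Ψ), then every topological homomorphism φ : P^⊥ → Q^⊥ is identically zero. -/

import Mathlib

/-!
Continuity and compactness of `P^⊥` make `φ` a sliding block code: `(φ x)(g)` only depends on
`x` on a finite window `W + g`. By Frobenius, `x(n + p^k e_d) = Σ_m Φ(m) x(n + p^k m)` on `P^⊥`,
and likewise on `Q^⊥` with `Ψ`. Take `m₀ ∈ S(Φ) \ S(Ψ)` and `k` so large that the windows around
the sites `p^k m` are far apart. The automaton is surjective and propagates information at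
finite speed, so there is `δ ∈ P^⊥` equal to `Φ(m₀)⁻¹ x(· + p^k (e_d - m₀))` near `p^k m₀` and
vanishing near all the other sites `p^k m`. Then `δ = x` on the window at `p^k e_d`, so
`(φ x)(p^k e_d) = (φ δ)(p^k e_d) = Σ_m Ψ(m) (φ δ)(p^k m) = 0`, every term vanishing because
`m₀ ∉ S(Ψ)` and `φ 0 = 0`. Shifting, `φ x = 0`.
-/

open MeasureTheory Filter Topology

namespace LCA

/-- The full shift `𝔽_p^{ℤ^d}`. -/
abbrev Full (p d : ℕ) : Type := (Fin d → ℤ) → ZMod p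

/-- The shift action: `(σ_g x)(n) = x(n+g)`. -/
def shift (p d : ℕ) (g : Fin d → ℤ) (x : Full p d) : Full p d := fun n => x (n + g)

/-- `e_d = (0,…,0,1)`, the exponent of the "time" variable `X_d`. -/
def eLast (d : ℕ) : Fin d → ℤ := fun i => if (i : ℕ) = d - 1 then 1 else 0

/-- The linear cellular automaton shift `P^⊥` for `P = X_d − Φ`, as a set:
all `x` with `x(n+e_d) = Σ_{m ∈ S(Φ)} Φ(m)·x(n+m)` for every `n`. -/
def Pperp (p d : ℕ) (Φ : (Fin d → ℤ) →₀ ZMod p) : Set (Full p d) :=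
  {x | ∀ n : Fin d → ℤ, x (n + eLast d) = ∑ m ∈ Φ.support, Φ m * x (n + m)}

/-- `P^⊥` as a closed, shift-invariant subgroup of the full shift. -/
def PperpGroup (p d : ℕ) (Φ : (Fin d → ℤ) →₀ ZMod p) : AddSubgroup (Full p d) where
  carrier := Pperp p d Φ
  zero_mem' := by intro n; simp
  add_mem' := by
    intro x y hx hy n
    simp only [Pi.add_apply, hx n, hy n, mul_add, Finset.sum_add_distrib]
  neg_mem' := by
    intro x hx n
    simp only [Pi.neg_apply, hx n, mul_neg, Finset.sum_neg_distrib, neg_inj]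

lemma shift_mem_Pperp (p d : ℕ) (Φ : (Fin d → ℤ) →₀ ZMod p) (g : Fin d → ℤ)
    {x : Full p d} (hx : x ∈ Pperp p d Φ) : shift p d g x ∈ Pperp p d Φ := by
  intro n
  simpa [shift, add_right_comm] using hx (n + g)

/-- The shift action restricted to `P^⊥`. -/
def shiftSub (p d : ℕ) (Φ : (Fin d → ℤ) →₀ ZMod p) (g : Fin d → ℤ)
    (x : PperpGroup p d Φ) : PperpGroup p d Φ :=
  ⟨shift p d g x.1, shift_mem_Pperp p d Φ g x.2⟩

end LCA

open LCA

lemma IsCompact.exists_finset_eq_of_continuous {ι : Type*} {X : ι → Type*}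
    [∀ i, TopologicalSpace (X i)] {S : Set (∀ i, X i)} (hS : IsCompact S) {Y : Type*}
    [TopologicalSpace Y] [DiscreteTopology Y] {f : S → Y} (hf : Continuous f) :
    ∃ I : Finset ι, ∀ x y : S, (∀ i ∈ I, x.1 i = y.1 i) → f x = f y := by
  classical
  have hcyl (x : S) : ∃ (I : Finset ι) (u : ∀ i, Set (X i)),
      (∀ i ∈ I, IsOpen (u i) ∧ x.1 i ∈ u i) ∧ ∀ y : S, y.1 ∈ (I : Set ι).pi u → f y = f x := by
    obtain ⟨V, hV, hVf⟩ := isOpen_induced_iff.mp ((isOpen_discrete {f x}).preimage hf)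
    have hxV : x ∈ Subtype.val ⁻¹' V := by rw [hVf]; rfl
    obtain ⟨I, u, hu, hIV⟩ := isOpen_pi_iff.mp hV x.1 hxV
    refine ⟨I, u, hu, fun y hy => ?_⟩
    have hyV : y ∈ Subtype.val ⁻¹' V := hIV hy
    rwa [hVf] at hyV
  choose I u hu hfu using hcyl
  obtain ⟨t, ht⟩ := hS.elim_finite_subcover (fun x : S => (I x : Set ι).pi (u x))
    (fun x => isOpen_set_pi (I x).finite_toSet fun i hi => (hu x i hi).1)
    (fun x hx => Set.mem_iUnion.mpr ⟨⟨x, hx⟩, fun i hi => (hu _ i hi).2⟩)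
  refine ⟨t.sup I, fun x y hxy => ?_⟩
  obtain ⟨z, hzt, hxz⟩ := Set.mem_iUnion₂.mp (ht x.2)
  have hyz : y.1 ∈ (I z : Set ι).pi (u z) := fun i hi =>
    hxy i (Finset.mem_sup.mpr ⟨z, hzt, hi⟩) ▸ hxz i hi
  rw [hfu z x hxz, hfu z y hyz]

lemma Finset.exists_nat_norm_le {E : Type*} [SeminormedAddGroup E] (s : Finset E) :
    ∃ r : ℕ, ∀ x ∈ s, ‖x‖ ≤ r :=
  ⟨⌈∑ x ∈ s, ‖x‖⌉₊, fun _ hx =>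
    (Finset.single_le_sum (fun y _ => norm_nonneg y) hx).trans (Nat.le_ceil _)⟩

lemma Function.Surjective.exists_int_orbit {α : Type*} {f : α → α} (hf : f.Surjective) (a : α) :
    ∃ y : ℤ → α, y 0 = a ∧ ∀ t, y (t + 1) = f (y t) := by
  let g := Function.surjInv hf
  refine ⟨fun t => match t with
    | .ofNat n => f^[n] a
    | .negSucc n => g^[n + 1] a, rfl, ?_⟩
  rintro (n | n)
  · exact Function.iterate_succ_apply' f n a
  · cases n with
    | zero => exact (Function.surjInv_eq hf a).symm
    | succ n =>
      show g^[n + 1] a = f (g^[n + 2] a)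
      rw [Function.iterate_succ_apply' g (n + 1), Function.surjInv_eq hf]

lemma le_norm_nsmul_sub {ι : Type*} [Fintype ι] {m m' : ι → ℤ} (h : m ≠ m') (N : ℕ) :
    (N : ℝ) ≤ ‖N • m - N • m'‖ := by
  obtain ⟨i, hi⟩ := Function.ne_iff.mp h
  refine le_trans ?_ (norm_le_pi_norm _ i)
  have h1 : (1 : ℝ) ≤ |((m i - m' i : ℤ) : ℝ)| := by
    exact_mod_cast Int.one_le_abs (sub_ne_zero.mpr hi)
  have h2 : (N • m - N • m') i = N * (m i - m' i) := by simp [mul_sub]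
  rw [h2, Int.norm_eq_abs, Int.cast_mul, abs_mul, Int.cast_natCast, Nat.abs_cast]
  exact le_mul_of_one_le_right N.cast_nonneg h1

namespace LCA

open AddMonoidAlgebra

variable {p d : ℕ}

def shiftHom (p d : ℕ) : Multiplicative (Fin d → ℤ) →* Module.End (ZMod p) (Full p d) where
  toFun g := LinearMap.funLeft (ZMod p) (ZMod p) (· + g.toAdd)
  map_one' := by ext x n; simp
  map_mul' a b := by ext x n; simp [add_assoc]

noncomputable def polyAction (p d : ℕ) :
    AddMonoidAlgebra (ZMod p) (Fin d → ℤ) →ₐ[ZMod p] Module.End (ZMod p) (Full p d) :=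
  lift (ZMod p) _ (Fin d → ℤ) (shiftHom p d)

@[simp]
lemma polyAction_single (a : Fin d → ℤ) (b : ZMod p) (x : Full p d) (n : Fin d → ℤ) :
    polyAction p d (single a b) x n = b * x (n + a) := by
  simp [polyAction, lift_single, shiftHom]

lemma polyAction_sum_single {ι : Type*} (s : Finset ι) (a : ι → Fin d → ℤ) (b : ι → ZMod p)
    (x : Full p d) (n : Fin d → ℤ) :
    polyAction p d (∑ i ∈ s, single (a i) (b i)) x n = ∑ i ∈ s, b i * x (n + a i) := by
  simp [Finset.sum_apply, LinearMap.sum_apply]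

noncomputable def lcaPoly (Φ : (Fin d → ℤ) →₀ ZMod p) : AddMonoidAlgebra (ZMod p) (Fin d → ℤ) :=
  single (eLast d) 1 - ∑ m ∈ Φ.support, single m (Φ m)

lemma mem_Pperp_iff_polyAction {Φ : (Fin d → ℤ) →₀ ZMod p} {x : Full p d} :
    x ∈ Pperp p d Φ ↔ polyAction p d (lcaPoly Φ) x = 0 := by
  simp [lcaPoly, funext_iff, sub_eq_zero, Pperp]

lemma lcaPoly_pow_prime_pow [Fact p.Prime] (Φ : (Fin d → ℤ) →₀ ZMod p) (k : ℕ) :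
    lcaPoly Φ ^ p ^ k
      = single (p ^ k • eLast d) 1 - ∑ m ∈ Φ.support, single (p ^ k • m) (Φ m) := by
  have : CharP (AddMonoidAlgebra (ZMod p) (Fin d → ℤ)) p :=
    charP_of_injective_algebraMap' (ZMod p) p
  simp only [lcaPoly, sub_pow_char_pow, sum_pow_char_pow, single_pow, one_pow, ZMod.pow_card_pow]

/-- By Frobenius, `P^{p^k} = X_d^{p^k} - Σ_m Φ(m) X^{p^k m}` also annihilates `x`. -/
lemma Pperp_apply_add_pow_smul [Fact p.Prime] {Φ : (Fin d → ℤ) →₀ ZMod p} {x : Full p d}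
    (hx : x ∈ Pperp p d Φ) (k : ℕ) (n : Fin d → ℤ) :
    x (n + p ^ k • eLast d) = ∑ m ∈ Φ.support, Φ m * x (n + p ^ k • m) := by
  have hpow : polyAction p d (lcaPoly Φ ^ p ^ k) x = 0 := by
    obtain ⟨N, hN⟩ := Nat.exists_eq_add_one.mpr (pow_pos (Fact.out : p.Prime).pos k)
    rw [map_pow, hN, pow_succ, Module.End.mul_apply, mem_Pperp_iff_polyAction.mp hx, map_zero]
  have h := congrFun hpow n
  rw [lcaPoly_pow_prime_pow, map_sub, LinearMap.sub_apply, Pi.sub_apply, polyAction_single,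
    one_mul, polyAction_sum_single] at h
  exact sub_eq_zero.mp h

def caMap (Φ : (Fin d → ℤ) →₀ ZMod p) (y : Full p d) : Full p d :=
  fun n => ∑ m ∈ Φ.support, Φ m * y (n + m)

lemma caMap_add (Φ : (Fin d → ℤ) →₀ ZMod p) (y z : Full p d) :
    caMap Φ (y + z) = caMap Φ y + caMap Φ z := by
  ext n
  simp [caMap, mul_add, Finset.sum_add_distrib]

lemma caMap_single (Φ : (Fin d → ℤ) →₀ ZMod p) (q n : Fin d → ℤ) (c : ZMod p) :
    caMap Φ (Pi.single q c) n = Φ (q - n) * c := by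
  rw [caMap, Finset.sum_eq_single (q - n)]
  · simp
  · intro m _ hm
    rw [Pi.single_eq_of_ne (fun h => hm (by rw [← h]; abel)), mul_zero]
  · intro h
    rw [Finsupp.notMem_support_iff.mp h, zero_mul]

lemma continuous_caMap_apply (Φ : (Fin d → ℤ) →₀ ZMod p) (n : Fin d → ℤ) :
    Continuous fun y : Full p d => caMap Φ y n := by
  unfold caMap
  fun_prop

/-- Ordering `ℤ^d` lexicographically, the top monomial of `Φ` makes the system
`caMap Φ y = w` triangular on any finite set of sites. -/
lemma exists_caMap_eqOn [Fact p.Prime] {Φ : (Fin d → ℤ) →₀ ZMod p} (hΦ : Φ.support.Nonempty)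
    (w : Full p d) (F : Finset (Fin d → ℤ)) : ∃ y : Full p d, ∀ n ∈ F, caMap Φ y n = w n := by
  classical
  obtain ⟨top, htop, hmax⟩ := Φ.support.exists_max_image toLex hΦ
  induction F using Finset.induction_on_max_value (ι := Fin d → ℤ) toLex with
  | empty => exact ⟨0, by simp⟩
  | insert a s has hsa ih =>
    obtain ⟨y, hy⟩ := ih
    refine ⟨y + Pi.single (a + top) ((Φ top)⁻¹ * (w a - caMap Φ y a)), fun n hn => ?_⟩
    rw [caMap_add, Pi.add_apply, caMap_single]
    rcases Finset.mem_insert.mp hn with rfl | hns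
    · rw [add_sub_cancel_left, ← mul_assoc,
        mul_inv_cancel₀ (Finsupp.mem_support_iff.mp htop), one_mul, add_sub_cancel]
    · suffices a + top - n ∉ Φ.support by
        rw [Finsupp.notMem_support_iff.mp this, zero_mul, add_zero, hy n hns]
      intro hmem
      have hlt : toLex n < toLex a := (hsa n hns).lt_of_ne fun h => has (toLex.injective h ▸ hns)
      have := add_lt_add_of_lt_of_le hlt (hmax _ hmem)
      simp only [← toLex_add, add_sub_cancel, lt_self_iff_false] at this

lemma caMap_surjective [Fact p.Prime] {Φ : (Fin d → ℤ) →₀ ZMod p} (hΦ : Φ.support.Nonempty) :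
    Function.Surjective (caMap Φ) := by
  intro w
  let sols : Finset (Fin d → ℤ) → Set (Full p d) := fun F => {y | ∀ n ∈ F, caMap Φ y n = w n}
  have hclosed (F : Finset (Fin d → ℤ)) : IsClosed (sols F) := by
    simp only [sols, Set.ofPred_forall]
    exact isClosed_biInter fun n _ => isClosed_eq (continuous_caMap_apply Φ n) continuous_const
  have hdir : Directed (· ⊇ ·) sols := fun F G =>
    ⟨F ∪ G, fun y hy n hn => hy n (Finset.mem_union_left _ hn),
      fun y hy n hn => hy n (Finset.mem_union_right _ hn)⟩
  obtain ⟨y, hy⟩ := IsCompact.nonempty_iInter_of_directed_nonempty_isCompact_isClosed sols hdir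
    (exists_caMap_eqOn hΦ w) (fun F => (hclosed F).isCompact) hclosed
  exact ⟨y, funext fun n => Set.mem_iInter.mp hy {n} n (Finset.mem_singleton_self n)⟩

lemma smul_mem_Pperp {Φ : (Fin d → ℤ) →₀ ZMod p} (c : ZMod p) {x : Full p d}
    (hx : x ∈ Pperp p d Φ) : c • x ∈ Pperp p d Φ := by
  intro n
  simp [hx n, Finset.mul_sum, mul_left_comm]

lemma isClosed_Pperp (Φ : (Fin d → ℤ) →₀ ZMod p) : IsClosed (Pperp p d Φ) := by
  simp only [Pperp, Set.ofPred_forall]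
  exact isClosed_iInter fun n => isClosed_eq (continuous_apply _) (continuous_caMap_apply Φ n)

lemma exists_window [Fact p.Prime] {Φ Ψ : (Fin d → ℤ) →₀ ZMod p}
    {φ : PperpGroup p d Φ → PperpGroup p d Ψ} (hcont : Continuous φ)
    (hequiv : ∀ g x, φ (shiftSub p d Φ g x) = shiftSub p d Ψ g (φ x)) :
    ∃ W : Finset (Fin d → ℤ), ∀ g x y,
      (∀ w ∈ W, x.1 (w + g) = y.1 (w + g)) → (φ x).1 g = (φ y).1 g := by
  obtain ⟨W, hW⟩ := (isClosed_Pperp Φ).isCompact.exists_finset_eq_of_continuous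
    (f := fun x : PperpGroup p d Φ => (φ x).1 0)
    (((continuous_apply 0).comp continuous_subtype_val).comp hcont)
  refine ⟨W, fun g x y hxy => ?_⟩
  have h := hW (shiftSub p d Φ g x) (shiftSub p d Φ g y) hxy
  rw [hequiv, hequiv] at h
  simpa [shiftSub, shift] using h

section Slices

variable {L : Fin d} {Φ : (Fin d → ℤ) →₀ ZMod p}

lemma eLast_eq_single (hL : (L : ℕ) = d - 1) : eLast d = Pi.single L 1 := by
  ext i
  simp [eLast, Pi.single_apply, ← hL, Fin.val_inj]

lemma norm_sub_smul_single_le (v : Fin d → ℤ) (L : Fin d) :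
    ‖v - v L • Pi.single L 1‖ ≤ ‖v‖ := by
  refine (pi_norm_le_iff_of_nonneg (norm_nonneg v)).mpr fun i => ?_
  by_cases h : i = L
  · subst h; simp
  · simpa [Pi.single_apply, h] using norm_le_pi_norm v i

lemma mem_Pperp_of_orbit (hL : (L : ℕ) = d - 1) (hΦL : ∀ m ∈ Φ.support, m L = 0)
    {y : ℤ → Full p d} (hy : ∀ t, y (t + 1) = caMap Φ (y t)) :
    (fun n => y (n L) (n - n L • eLast d)) ∈ Pperp p d Φ := by
  intro n
  have hL1 : (n + eLast d) L = n L + 1 := by simp [eLast_eq_single hL]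
  simp only [hL1, hy, caMap]
  refine Finset.sum_congr rfl fun m hm => ?_
  have hmL : (n + m) L = n L := by simp [hΦL m hm]
  rw [hmL, add_smul, one_smul]
  congr 2
  abel

lemma exists_mem_Pperp_eqOn_slice [Fact p.Prime] (hL : (L : ℕ) = d - 1)
    (hΦL : ∀ m ∈ Φ.support, m L = 0) (hΦ : Φ.support.Nonempty) (u : Full p d) (s : ℤ) :
    ∃ δ ∈ Pperp p d Φ, ∀ n, n L = s → δ n = u n := by
  obtain ⟨y, hy0, hy⟩ := (caMap_surjective hΦ).exists_int_orbit (shift p d (s • eLast d) u)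
  refine ⟨_, mem_Pperp_of_orbit (y := fun t => y (t - s)) hL hΦL
    (fun t => by rw [← sub_add_eq_add_sub]; exact hy _), fun n hn => ?_⟩
  simp [hn, hy0, shift]

lemma Pperp_eq_zero_of_eq_zero_on_slice (hΦL : ∀ m ∈ Φ.support, m L = 0) {R : ℕ}
    (hR : ∀ m ∈ Φ.support, ‖m‖ ≤ R) {x : Full p d}
    (hx : x ∈ Pperp p d Φ) (a : Fin d → ℤ) (t : ℕ) (ρ : ℝ)
    (h : ∀ n, n L = a L → ‖n - a‖ ≤ ρ + t * R → x n = 0) :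
    ∀ n, n L = a L → ‖n - a‖ ≤ ρ → x (n + t • eLast d) = 0 := by
  induction t generalizing ρ with
  | zero => simpa using h
  | succ t ih =>
    intro n hnL hn
    rw [succ_nsmul, ← add_assoc, hx]
    refine Finset.sum_eq_zero fun m hm => ?_
    have hih := ih (ρ + R) (fun n' hn'L hn' => h n' hn'L (by push_cast at hn' ⊢; linarith))
      (n + m) (by simp [hΦL m hm, hnL])
      (by
        calc ‖n + m - a‖ = ‖(n - a) + m‖ := by rw [add_sub_right_comm]
          _ ≤ ‖n - a‖ + ‖m‖ := norm_add_le _ _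
          _ ≤ ρ + R := add_le_add hn (hR m hm))
    rw [add_right_comm, hih, mul_zero]

lemma Pperp_eq_zero_on_ball (hL : (L : ℕ) = d - 1)
    (hΦL : ∀ m ∈ Φ.support, m L = 0) {R : ℕ} (hR : ∀ m ∈ Φ.support, ‖m‖ ≤ R) {x : Full p d}
    (hx : x ∈ Pperp p d Φ) (a : Fin d → ℤ) (r : ℕ)
    (h : ∀ n, n L = a L - r → ‖n - (a - r • eLast d)‖ ≤ r + 2 * r * R → x n = 0) :
    ∀ n, ‖n - a‖ ≤ r → x n = 0 := by
  intro n hn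
  have hvL : |n L - a L| ≤ r := by
    have := (norm_le_pi_norm (n - a) L).trans hn
    rwa [Pi.sub_apply, Int.norm_eq_abs, ← Int.cast_abs, ← Int.cast_natCast, Int.cast_le] at this
  obtain ⟨t, ht⟩ : ∃ t : ℕ, (t : ℤ) = n L - a L + r := ⟨(n L - a L + r).toNat, by
    rw [Int.toNat_of_nonneg (by linarith [neg_abs_le (n L - a L)])]⟩
  have hcenter : (n - t • eLast d) - (a - r • eLast d) = (n - a) - (n - a) L • Pi.single L 1 := by
    rw [eLast_eq_single hL]
    ext i
    by_cases hi : i = L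
    · subst hi; simp; linarith
    · simp [hi]
  have key := Pperp_eq_zero_of_eq_zero_on_slice hΦL hR hx (a - r • eLast d) t r
    (fun n' hn'L hn' => h n' (by simpa [eLast_eq_single hL] using hn'L) (hn'.trans ?_))
    (n - t • eLast d) ?_ ?_
  · rwa [sub_add_cancel] at key
  · have ht2 : (t : ℤ) ≤ 2 * r := by linarith [le_abs_self (n L - a L)]
    have : (t : ℝ) ≤ 2 * r := by exact_mod_cast ht2
    nlinarith [(R.cast_nonneg : (0 : ℝ) ≤ R)]
  · simp [eLast_eq_single hL]; linarith
  · rw [hcenter]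
    exact (norm_sub_smul_single_le _ _).trans hn

/-- Cut off the time slice of `η` that lies `r` steps below `a` and extend the cut-off slice to a
configuration of `P^⊥`: by finite speed of propagation it still agrees with `η` near `a`, and
vanishes near the far away points of `B`. -/
lemma exists_mem_Pperp_eqOn_ball [Fact p.Prime] (hL : (L : ℕ) = d - 1)
    (hΦL : ∀ m ∈ Φ.support, m L = 0) (hΦ : Φ.support.Nonempty) {R : ℕ}
    (hR : ∀ m ∈ Φ.support, ‖m‖ ≤ R) {η : Full p d} (hη : η ∈ Pperp p d Φ) (r : ℕ)
    (a : Fin d → ℤ) (B : Set (Fin d → ℤ)) (hBL : ∀ b ∈ B, b L = a L)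
    (hBfar : ∀ b ∈ B, 2 * (r + 2 * r * R : ℝ) < ‖b - a‖) :
    ∃ δ ∈ Pperp p d Φ, (∀ n, ‖n - a‖ ≤ r → δ n = η n) ∧
      ∀ b ∈ B, ∀ n, ‖n - b‖ ≤ r → δ n = 0 := by
  classical
  set e := r • eLast d
  obtain ⟨δ, hδ, hδu⟩ := exists_mem_Pperp_eqOn_slice hL hΦL hΦ
    (fun n => if ‖n - (a - e)‖ ≤ r + 2 * r * R then η n else 0) (a L - r)
  refine ⟨δ, hδ, fun n hn => ?_, fun b hb => ?_⟩
  · refine sub_eq_zero.mp (Pperp_eq_zero_on_ball hL hΦL hR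
      ((PperpGroup p d Φ).sub_mem hδ hη) a r (fun n' hn'L hn' => ?_) n hn)
    rw [Pi.sub_apply, hδu n' hn'L, if_pos hn', sub_self]
  · refine Pperp_eq_zero_on_ball hL hΦL hR hδ b r fun n hnL hnb => ?_
    rw [hδu n (hnL.trans (by rw [hBL b hb])), if_neg]
    intro hna
    have : ‖b - a‖ ≤ ‖n - (a - e)‖ + ‖n - (b - e)‖ := by
      calc ‖b - a‖ = ‖(n - (a - e)) - (n - (b - e))‖ := by congr 1; abel
        _ ≤ _ := norm_sub_le _ _
    linarith [hBfar b hb]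

end Slices

theorem apply_pow_smul_eLast_eq_zero [Fact p.Prime] {L : Fin d} (hL : (L : ℕ) = d - 1)
    {Φ Ψ : (Fin d → ℤ) →₀ ZMod p} (hΦL : ∀ m ∈ Φ.support, m L = 0)
    (hΨL : ∀ m ∈ Ψ.support, m L = 0) (hnotsub : ¬ Φ.support ⊆ Ψ.support)
    {φ : PperpGroup p d Φ → PperpGroup p d Ψ} (h0 : φ 0 = 0) {W : Finset (Fin d → ℤ)}
    (hW : ∀ g x y, (∀ w ∈ W, x.1 (w + g) = y.1 (w + g)) → (φ x).1 g = (φ y).1 g)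
    {r R k : ℕ} (hr : ∀ w ∈ W, ‖w‖ ≤ r) (hR : ∀ m ∈ Φ.support, ‖m‖ ≤ R)
    (hk : 2 * (r + 2 * r * R) < p ^ k) (x : PperpGroup p d Φ) :
    (φ x).1 (p ^ k • eLast d) = 0 := by
  classical
  obtain ⟨m₀, hm₀Φ, hm₀Ψ⟩ := Finset.not_subset.mp hnotsub
  set c := p ^ k • eLast d
  set B : Set (Fin d → ℤ) := (p ^ k • ·) '' {m | (m ∈ Φ.support ∨ m ∈ Ψ.support) ∧ m ≠ m₀}
  have hBL : ∀ b ∈ B, b L = (p ^ k • m₀) L := by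
    rintro _ ⟨m, ⟨hm | hm, -⟩, rfl⟩ <;> simp [hΦL, hΨL, hm, hm₀Φ]
  have hBfar : ∀ b ∈ B, 2 * (r + 2 * r * R : ℝ) < ‖b - p ^ k • m₀‖ := by
    rintro _ ⟨m, ⟨-, hm⟩, rfl⟩
    have hk' : 2 * (r + 2 * r * R : ℝ) < (p ^ k : ℕ) := by exact_mod_cast hk
    exact hk'.trans_le (le_norm_nsmul_sub hm _)
  have hη : (Φ m₀)⁻¹ • shift p d (c - p ^ k • m₀) x.1 ∈ Pperp p d Φ :=
    smul_mem_Pperp _ (shift_mem_Pperp _ _ _ _ x.2)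
  obtain ⟨δ, hδ, hδη, hδB⟩ :=
    exists_mem_Pperp_eqOn_ball hL hΦL ⟨m₀, hm₀Φ⟩ hR hη r (p ^ k • m₀) B hBL hBfar
  have hxδ : ∀ w ∈ W, x.1 (w + c) = δ (w + c) := by
    intro w hw
    rw [Pperp_apply_add_pow_smul hδ, Finset.sum_eq_single m₀]
    · rw [add_comm w, hδη _ (by simpa using hr w hw)]
      simp [shift, c, Finsupp.mem_support_iff.mp hm₀Φ, add_comm]
    · intro m hm hne
      rw [add_comm w, hδB _ ⟨m, ⟨Or.inl hm, hne⟩, rfl⟩ _ (by simpa using hr w hw), mul_zero]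
    · exact fun h => absurd hm₀Φ h
  have hδΨ : ∀ m ∈ Ψ.support, (φ ⟨δ, hδ⟩).1 (p ^ k • m) = 0 := by
    intro m hm
    rw [hW _ _ 0 fun w hw => hδB _ ⟨m, ⟨Or.inr hm, ne_of_mem_of_not_mem hm hm₀Ψ⟩, rfl⟩ _
      (by simpa using hr w hw), h0]
    rfl
  calc (φ x).1 c = (φ ⟨δ, hδ⟩).1 c := hW c x ⟨δ, hδ⟩ hxδ
    _ = ∑ m ∈ Ψ.support, Ψ m * (φ ⟨δ, hδ⟩).1 (p ^ k • m) := by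
      simpa only [zero_add] using Pperp_apply_add_pow_smul (φ ⟨δ, hδ⟩).2 k 0
    _ = 0 := Finset.sum_eq_zero fun m hm => by rw [hδΨ m hm, mul_zero]

end LCA

/-- If `S(Φ)` is not contained in `S(Ψ)`, then every topological
homomorphism `φ : P^⊥ → Q^⊥` is identically zero. -/
theorem hom_trivial_of_not_subset (p d : ℕ) [Fact p.Prime] (hd : 2 ≤ d)
    (Φ Ψ : (Fin d → ℤ) →₀ ZMod p)
    (hΦsupp : ∀ m ∈ Φ.support, m ⟨d - 1, by omega⟩ = 0)
    (hΨsupp : ∀ m ∈ Ψ.support, m ⟨d - 1, by omega⟩ = 0)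
    (hnotsub : ¬ Φ.support ⊆ Ψ.support)
    (φ : PperpGroup p d Φ → PperpGroup p d Ψ)
    (hcont : Continuous φ) (h0 : φ 0 = 0)
    (hequiv : ∀ (g : Fin d → ℤ) (x : PperpGroup p d Φ),
      φ (shiftSub p d Φ g x) = shiftSub p d Ψ g (φ x)) :
    ∀ x : PperpGroup p d Φ, φ x = 0 := by
  obtain ⟨W, hW⟩ := exists_window hcont hequiv
  obtain ⟨r, hr⟩ := W.exists_nat_norm_le
  obtain ⟨R, hR⟩ := Φ.support.exists_nat_norm_le
  set k := 2 * (r + 2 * r * R)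
  have hzero := apply_pow_smul_eLast_eq_zero (L := ⟨d - 1, by omega⟩) rfl hΦsupp hΨsupp hnotsub
    h0 hW hr hR (Nat.lt_pow_self (Fact.out : p.Prime).one_lt : k < p ^ k)
  intro x
  ext g
  have h := hzero (shiftSub p d Φ (g - p ^ k • eLast d) x)
  rw [hequiv] at h
  simpa [shiftSub, shift] using h
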